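/- In the graded-commutative algebra Λ generated over Q by elements α_ij (1 ≤ i,j ≤ 4) of a fixed degree d = n−1, subject to α_ii = 0, α_ij² = 0, α_ij = (−1)^n α_ji, graded commutativity α_ij α_kl = (−1)^{n+1} α_kl α_ij, and the three-term relation α_ij α_jk + α_jk α_ki + α_ki α_ij = 0, the subspace of degree 2(n−1) spanned by products α_ij α_kl with all of 1,2,3,4 appearing as indices has the property that the elements α_13 α_24 and α_12 α_34 + α_14 α_23 are linearly independent. -/

import Mathlib

noncomputable section

/-- Generators `α_ij`, `i ≠ j`, for the Arnold algebra on `p` points. -/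
def Gen (p : ℕ) : Type := {q : Fin p × Fin p // q.1 ≠ q.2}

open FreeAlgebra in
/-- The defining relations of the Arnold algebra with generators in degree `n - 1`:
`α_ij² = 0`, `α_ij = (-1)ⁿ α_ji`, graded commutativity `α_ij α_kl = (-1)^{n+1} α_kl α_ij`,
and the three-term (Arnold) relation. -/
inductive ArnoldRel (n p : ℕ) : FreeAlgebra ℚ (Gen p) → FreeAlgebra ℚ (Gen p) → Prop
  | sq (g : Gen p) : ArnoldRel n p (ι ℚ g * ι ℚ g) 0
  | symm (i j : Fin p) (h : i ≠ j) :
      ArnoldRel n p (ι ℚ ⟨(j, i), h.symm⟩) (((-1 : ℚ) ^ n) • ι ℚ ⟨(i, j), h⟩)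
  | comm (g g' : Gen p) :
      ArnoldRel n p (ι ℚ g * ι ℚ g') (((-1 : ℚ) ^ (n + 1)) • (ι ℚ g' * ι ℚ g))
  | arnold (i j k : Fin p) (hij : i ≠ j) (hjk : j ≠ k) (hki : k ≠ i) :
      ArnoldRel n p
        (ι ℚ ⟨(i, j), hij⟩ * ι ℚ ⟨(j, k), hjk⟩ + ι ℚ ⟨(j, k), hjk⟩ * ι ℚ ⟨(k, i), hki⟩ +
          ι ℚ ⟨(k, i), hki⟩ * ι ℚ ⟨(i, j), hij⟩) 0

/-- The Arnold algebra: the free algebra on the `α_ij` modulo the relations above. -/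
def ArnoldAlg (n p : ℕ) : Type := RingQuot (ArnoldRel n p)

instance (n p : ℕ) : Ring (ArnoldAlg n p) := inferInstanceAs (Ring (RingQuot (ArnoldRel n p)))
instance (n p : ℕ) : Algebra ℚ (ArnoldAlg n p) := inferInstanceAs (Algebra ℚ (RingQuot (ArnoldRel n p)))

/-- The class of the generator `α_ij` in the Arnold algebra. -/
def α (n p : ℕ) (i j : Fin p) (h : i ≠ j) : ArnoldAlg n p :=
  RingQuot.mkAlgHom ℚ (ArnoldRel n p) (FreeAlgebra.ι ℚ ⟨(i, j), h⟩)

/- ### Auxiliary material: a matrix representation of the Arnold algebra on 4 points -/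

lemma std_mul (i j k l : Fin 7) (a b : ℚ) :
    Matrix.single i j a * Matrix.single k l b
      = if j = k then Matrix.single i l (a * b) else 0 := by
  split
  · subst ‹j = k›; exact Matrix.single_mul_single_same (c := a) i j l b
  · exact Matrix.single_mul_single_of_ne (c := a) i j k ‹j ≠ k› b

lemma std_neg (i j : Fin 7) (a : ℚ) :
    -Matrix.single i j a = Matrix.single i j (-a) := by
  rw [← neg_one_smul ℚ (Matrix.single i j a), Matrix.smul_single,
    smul_eq_mul, neg_one_mul]

/-- The representing matrices for the generators. -/
def Xm (s : ℚ) : Fin 4 → Fin 4 → Matrix (Fin 7) (Fin 7) ℚ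
  | 0, 1 => Matrix.single 0 1 1 + Matrix.single 2 5 (-s)
  | 1, 0 => s • (Matrix.single 0 1 1 + Matrix.single 2 5 (-s))
  | 2, 3 => Matrix.single 0 2 1 + Matrix.single 1 5 1
  | 3, 2 => s • (Matrix.single 0 2 1 + Matrix.single 1 5 1)
  | 0, 2 => Matrix.single 0 3 1 + Matrix.single 4 6 (-s)
  | 2, 0 => s • (Matrix.single 0 3 1 + Matrix.single 4 6 (-s))
  | 1, 3 => Matrix.single 0 4 1 + Matrix.single 3 6 1
  | 3, 1 => s • (Matrix.single 0 4 1 + Matrix.single 3 6 1)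
  | _, _ => 0

set_option maxHeartbeats 2000000 in
lemma Xm_sq (s : ℚ) (hs : s * s = 1) (i j : Fin 4) : Xm s i j * Xm s i j = 0 := by
  fin_cases i <;> fin_cases j <;>
    simp [Xm, std_mul, add_mul, mul_add, smul_add, smul_smul, Matrix.smul_single,
      smul_eq_mul, neg_mul, mul_neg, neg_neg, std_neg, hs]

set_option maxHeartbeats 2000000 in
lemma Xm_symm (s : ℚ) (hs : s * s = 1) (i j : Fin 4) : Xm s j i = s • Xm s i j := by
  fin_cases i <;> fin_cases j <;>
    simp [Xm, std_mul, add_mul, mul_add, smul_add, smul_smul, Matrix.smul_single,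
      smul_eq_mul, neg_mul, mul_neg, neg_neg, std_neg, hs]

set_option maxHeartbeats 4000000 in
lemma Xm_comm (s : ℚ) (hs : s * s = 1) (i j k l : Fin 4) :
    Xm s i j * Xm s k l = (-s) • (Xm s k l * Xm s i j) := by
  fin_cases i <;> fin_cases j <;> fin_cases k <;> fin_cases l <;>
    simp [Xm, std_mul, add_mul, mul_add, smul_add, smul_smul, Matrix.smul_single,
      smul_eq_mul, neg_mul, mul_neg, neg_neg, std_neg, hs]

set_option maxHeartbeats 4000000 in
lemma Xm_arnold (s : ℚ) (hs : s * s = 1) (i j k : Fin 4) :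
    Xm s i j * Xm s j k + Xm s j k * Xm s k i + Xm s k i * Xm s i j = 0 := by
  fin_cases i <;> fin_cases j <;> fin_cases k <;>
    simp [Xm, std_mul, add_mul, mul_add, smul_add, smul_smul, Matrix.smul_single,
      smul_eq_mul, neg_mul, mul_neg, neg_neg, std_neg, hs]

/-- in the Arnold algebra on 4 points with generators of degree `n − 1`
(the cohomology of the compactified configuration space of 4 points in `ℝⁿ`), the
degree-`2(n-1)` elements `α₁₃α₂₄` and `α₁₂α₃₄ + α₁₄α₂₃` are linearly independent over `ℚ`.
(Indices are written `0,…,3` instead of `1,…,4`.) -/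
theorem arnold_four_points_linearIndependent (n : ℕ) (hn : 3 ≤ n) :
    LinearIndependent ℚ
      ![α n 4 0 2 (by decide) * α n 4 1 3 (by decide),
        α n 4 0 1 (by decide) * α n 4 2 3 (by decide) +
          α n 4 0 3 (by decide) * α n 4 1 2 (by decide)] := by
  set s : ℚ := (-1 : ℚ) ^ n with hs_def
  have hs : s * s = 1 := by
    rw [hs_def, ← pow_add]
    exact Even.neg_one_pow ⟨n, rfl⟩
  let φ : FreeAlgebra ℚ (Gen 4) →ₐ[ℚ] Matrix (Fin 7) (Fin 7) ℚ :=
    FreeAlgebra.lift ℚ (fun g : Gen 4 => Xm s g.1.1 g.1.2)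
  have hrel : ∀ ⦃x y⦄, ArnoldRel n 4 x y → φ x = φ y := by
    intro x y r
    induction r with
    | sq g =>
        simp only [map_mul, map_zero, FreeAlgebra.lift_ι_apply, φ]
        exact Xm_sq s hs _ _
    | symm i j h =>
        simp only [map_smul, FreeAlgebra.lift_ι_apply, φ]
        have e1 : (FreeAlgebra.lift ℚ (fun g : Gen 4 => Xm s g.1.1 g.1.2)) (FreeAlgebra.ι ℚ ⟨(j, i), h.symm⟩) = Xm s j i := FreeAlgebra.lift_ι_apply _ _
        have e2 : (FreeAlgebra.lift ℚ (fun g : Gen 4 => Xm s g.1.1 g.1.2)) (FreeAlgebra.ι ℚ ⟨(i, j), h⟩) = Xm s i j := FreeAlgebra.lift_ι_apply _ _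
        have e := Xm_symm s hs i j
        rw [← e1, ← e2] at e
        exact e
    | comm g g' =>
        simp only [map_mul, map_smul, FreeAlgebra.lift_ι_apply, φ]
        rw [pow_succ, mul_neg_one, ← hs_def]
        exact Xm_comm s hs _ _ _ _
    | arnold i j k hij hjk hki =>
        simp only [map_add, map_mul, map_zero, FreeAlgebra.lift_ι_apply, φ]
        have e1 : (FreeAlgebra.lift ℚ (fun g : Gen 4 => Xm s g.1.1 g.1.2)) (FreeAlgebra.ι ℚ ⟨(i, j), hij⟩) = Xm s i j := FreeAlgebra.lift_ι_apply _ _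
        have e2 : (FreeAlgebra.lift ℚ (fun g : Gen 4 => Xm s g.1.1 g.1.2)) (FreeAlgebra.ι ℚ ⟨(j, k), hjk⟩) = Xm s j k := FreeAlgebra.lift_ι_apply _ _
        have e3 : (FreeAlgebra.lift ℚ (fun g : Gen 4 => Xm s g.1.1 g.1.2)) (FreeAlgebra.ι ℚ ⟨(k, i), hki⟩) = Xm s k i := FreeAlgebra.lift_ι_apply _ _
        have e := Xm_arnold s hs i j k
        rw [← e1, ← e2, ← e3] at e
        exact e
  let Φ : ArnoldAlg n 4 →ₐ[ℚ] Matrix (Fin 7) (Fin 7) ℚ :=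
    RingQuot.liftAlgHom ℚ ⟨φ, hrel⟩
  have hΦ : ∀ (i j : Fin 4) (h : i ≠ j), Φ (α n 4 i j h) = Xm s i j := by
    intro i j h
    show RingQuot.liftAlgHom ℚ ⟨φ, hrel⟩ (RingQuot.mkAlgHom ℚ (ArnoldRel n 4) (FreeAlgebra.ι ℚ ⟨(i, j), h⟩)) = _
    rw [RingQuot.liftAlgHom_mkAlgHom_apply]
    exact FreeAlgebra.lift_ι_apply _ _
  apply LinearIndependent.of_comp Φ.toLinearMap
  have h1 : Xm s 0 2 * Xm s 1 3 = Matrix.single 0 6 1 := by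
    simp [Xm, std_mul, add_mul, mul_add, neg_mul, mul_neg, neg_neg, std_neg]
  have h2 : Xm s 0 1 * Xm s 2 3 + Xm s 0 3 * Xm s 1 2 = Matrix.single 0 5 1 := by
    simp [Xm, std_mul, add_mul, mul_add, neg_mul, mul_neg, neg_neg, std_neg]
  have hcomp : (Φ.toLinearMap ∘
      ![α n 4 0 2 (by decide) * α n 4 1 3 (by decide),
        α n 4 0 1 (by decide) * α n 4 2 3 (by decide) +
          α n 4 0 3 (by decide) * α n 4 1 2 (by decide)]) =
      ![Matrix.single 0 6 1, Matrix.single 0 5 1] := by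
    funext i
    fin_cases i <;>
      simp [Function.comp, map_mul, map_add, hΦ, h1, h2]
  rw [hcomp]
  rw [linearIndependent_fin2]
  constructor
  · intro h
    have := congrFun (congrFun h 0) 5
    simp [Matrix.single_apply_same] at this
  · intro a h
    have := congrFun (congrFun h 0) 6
    simp [Matrix.single] at this
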